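/- Let N be a fully resolved tree-child time consistent phylogenetic network on taxa S, and suppose there is a hybrid node A whose only child is a tree leaf i, with parents v1 and v2 of A whose other children are tree leaves j1 and j2 respectively. Then L_N(i,j1) = L_N(i,j2) = 3, L_N(j1,j2) ≥ 4, and if L_N(j1,j2) = 4 then L_N(j1,k) = L_N(j2,k) for every leaf k ∈ S \ {i,j1,j2}. -/

import Mathlib

open Classical

/-- A walk (path) in a digraph: a nonempty list of vertices with consecutive arcs. -/
def IsWalk {V : Type} (E : V → V → Prop) (p : List V) : Prop := p ≠ [] ∧ p.Chain' E

/-- A path with origin `u` and end `v`. -/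
def WalkFromTo {V : Type} (E : V → V → Prop) (u v : V) (p : List V) : Prop :=
  IsWalk E p ∧ p.head? = some u ∧ p.getLast? = some v

/-- `v` is a descendant of `u` (possibly trivial path from `u` to `v`). -/
def Desc {V : Type} (E : V → V → Prop) (u v : V) : Prop := Relation.ReflTransGen E u v

/-- A root: a node with no incoming arcs. -/
def IsRootNode {V : Type} (E : V → V → Prop) (r : V) : Prop := ∀ u, ¬ E u r

/-- `u` is a strict ancestor of `v`: `v` is a descendant of `u` and every path
from a root to `v` contains `u`. -/
def StrictAnc {V : Type} (E : V → V → Prop) (u v : V) : Prop :=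
  Desc E u v ∧ ∀ (r : V) (p : List V), IsRootNode E r → WalkFromTo E r v p → u ∈ p

/-- In-degree. -/
noncomputable def indeg {V : Type} (E : V → V → Prop) (v : V) : ℕ := {u | E u v}.ncard
/-- Out-degree. -/
noncomputable def outdeg {V : Type} (E : V → V → Prop) (v : V) : ℕ := {w | E v w}.ncard

/-- Tree node: in-degree at most 1. -/
def IsTreeNode {V : Type} (E : V → V → Prop) (v : V) : Prop := indeg E v ≤ 1
/-- Hybrid node: in-degree at least 2. -/
def IsHybrid {V : Type} (E : V → V → Prop) (v : V) : Prop := 2 ≤ indeg E v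
/-- Leaf: no outgoing arcs. -/
def IsLeaf {V : Type} (E : V → V → Prop) (v : V) : Prop := ∀ w, ¬ E v w

/-- Acyclicity: no non-trivial path from a node to itself. -/
def Acyclic {V : Type} (E : V → V → Prop) : Prop := ∀ v, ¬ Relation.TransGen E v v

/-- A hybridization network: a rooted DAG whose single root has out-degree > 1. -/
structure IsHybNet {V : Type} (E : V → V → Prop) (r : V) : Prop where
  acyclic : Acyclic E
  isRoot : IsRootNode E r
  uniqueRoot : ∀ x, IsRootNode E x → x = r
  rootOut : 2 ≤ outdeg E r

/-- Tree-child condition: every internal node has a tree-node child. -/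
def TreeChild {V : Type} (E : V → V → Prop) : Prop :=
  ∀ v, ¬ IsLeaf E v → ∃ w, E v w ∧ IsTreeNode E w

/-- Time consistency: a temporal representation exists. -/
def TimeConsistent {V : Type} (E : V → V → Prop) : Prop :=
  ∃ τ : V → ℕ, ∀ u v, E u v → (IsTreeNode E v → τ u < τ v) ∧ (IsHybrid E v → τ u = τ v)

/-- The leaves are bijectively labeled by `S` via `leaf`. -/
def LabelsLeaves {V S : Type} (E : V → V → Prop) (leaf : S → V) : Prop :=
  Function.Injective leaf ∧ (∀ s, IsLeaf E (leaf s)) ∧ ∀ v, IsLeaf E v → ∃ s, leaf s = v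

/-- Distance: length of a shortest path from `u` to `v`. -/
noncomputable def dist {V : Type} (E : V → V → Prop) (u v : V) : ℕ :=
  sInf {n | ∃ p, WalkFromTo E u v p ∧ p.length = n + 1}

/-- Height: largest length of a path from `v` to a leaf. -/
noncomputable def height {V : Type} (E : V → V → Prop) (v : V) : ℕ :=
  sSup {n | ∃ p w, WalkFromTo E v w p ∧ IsLeaf E w ∧ p.length = n + 1}

/-- Common ancestors of `u` and `v` that are strict ancestors of at least one of them. -/
def CSAnc {V : Type} (E : V → V → Prop) (u v : V) : Set V :=
  {x | Desc E x u ∧ Desc E x v ∧ (StrictAnc E x u ∨ StrictAnc E x v)}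

/-- `x` is a least common semi-strict ancestor of `u` and `v`. -/
def IsLCSA {V : Type} (E : V → V → Prop) (u v x : V) : Prop :=
  x ∈ CSAnc E u v ∧ ∀ y ∈ CSAnc E u v, height E x ≤ height E y

/-- The least common semi-strict ancestor `[u,v]` (the root `r` witnesses nonemptiness). -/
noncomputable def lcsa {V : Type} (E : V → V → Prop) (r u v : V) : V :=
  @Classical.epsilon V ⟨r⟩ (IsLCSA E u v)

/-- `ℓ_N(u,v)`: the distance from `[u,v]` to `u`. -/
noncomputable def ell {V : Type} (E : V → V → Prop) (r u v : V) : ℕ :=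
  dist E (lcsa E r u v) u

/-- `L_N(u,v) = ℓ_N(u,v) + ℓ_N(v,u)`: the LCSA-path length between `u` and `v`. -/
noncomputable def pathLen {V : Type} (E : V → V → Prop) (r u v : V) : ℕ :=
  ell E r u v + ell E r v u

/-- `h_N(u,v)`: −1 if `[u,v]` is a strict ancestor of `u` only, 1 if of `v` only, 0 if of both. -/
noncomputable def hval {V : Type} (E : V → V → Prop) (r u v : V) : ℤ :=
  if StrictAnc E (lcsa E r u v) u then
    (if StrictAnc E (lcsa E r u v) v then 0 else -1)
  else 1

/-- Siblings: distinct nodes sharing a parent. -/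
def Sibling {V : Type} (E : V → V → Prop) (u v : V) : Prop :=
  u ≠ v ∧ ∃ p, E p u ∧ E p v

/-- A tree path: a non-trivial path whose end and intermediate nodes are tree nodes. -/
def TreePath {V : Type} (E : V → V → Prop) (p : List V) (u v : V) : Prop :=
  WalkFromTo E u v p ∧ 2 ≤ p.length ∧ ∀ w ∈ p.tail, IsTreeNode E w

/-- `v` is a tree descendant of `u`. -/
def TreeDesc {V : Type} (E : V → V → Prop) (u v : V) : Prop := ∃ p, TreePath E p u v

/-- Quasi-binary hybridization network. -/
def QuasiBinary {V : Type} (E : V → V → Prop) : Prop :=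
  ∀ v : V, (indeg E v, outdeg E v) ∈ ({(0,2),(1,0),(1,2),(2,0),(2,1),(2,2)} : Set (ℕ × ℕ))

/-- Fully resolved hybridization network node types. -/
def FullyResolvedHyb {V : Type} (E : V → V → Prop) : Prop :=
  ∀ v : V, (indeg E v, outdeg E v) ∈ ({(0,2),(1,0),(1,2),(2,0),(2,2)} : Set (ℕ × ℕ))

/-- Fully resolved phylogenetic network node types. -/
def FullyResolvedPhylo {V : Type} (E : V → V → Prop) : Prop :=
  ∀ v : V, (indeg E v, outdeg E v) ∈ ({(0,2),(1,0),(1,2),(2,1)} : Set (ℕ × ℕ))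

/-- Phylogenetic network condition: every hybrid node has exactly one child, a tree node. -/
def PhyloNet {V : Type} (E : V → V → Prop) : Prop :=
  ∀ v, IsHybrid E v → ∃ w, E v w ∧ IsTreeNode E w ∧ ∀ x, E v x → x = w


/-!
If `p` is the only parent of `v` and `k` is not below `v`, then `(v, k)` and `(p, k)` have the
same common semi-strict ancestors, and a shortest path from any of them to `v` runs through `p`;
hence `L(v, k) = L(p, k) + 1`. Applied at `j₁` this gives
`L(i, j₁) = L(i, v₁) + 1 = d(v₁, i) + 1 = 3`, and applied at `j₁` and `j₂` it gives
`L(j₁, j₂) = L(v₁, v₂) + 2`. The only descendants of `v₁` are `v₁, A, j₁, i`, so `v₁` and `v₂`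
are incomparable and `L(v₁, v₂) ≥ 2`. Equality forces `[v₁, v₂]` to be a common parent `x` of
`v₁` and `v₂`, by full resolution their only parent, and then `L(j₁, k) = L(x, k) + 2 = L(j₂, k)`.
-/

variable {V : Type} {E : V → V → Prop}

namespace WalkFromTo

lemma single (E : V → V → Prop) (u : V) : WalkFromTo E u u [u] :=
  ⟨⟨by simp, List.isChain_singleton _⟩, rfl, rfl⟩

lemma cons {u w v : V} {p : List V} (h : E u w) (hp : WalkFromTo E w v p) :
    WalkFromTo E u v (u :: p) := by
  obtain ⟨⟨-, hch⟩, hh, hl⟩ := hp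
  cases p with
  | nil => simp at hh
  | cons a q =>
    obtain rfl : a = w := by simpa using hh
    exact ⟨⟨by simp, List.isChain_cons_cons.2 ⟨h, hch⟩⟩, rfl, by simpa using hl⟩

lemma cons_cases {u v a : V} {q : List V} (h : WalkFromTo E u v (a :: q)) :
    u = a ∧ ((q = [] ∧ v = a) ∨ ∃ w, E a w ∧ WalkFromTo E w v q) := by
  obtain ⟨⟨-, hch⟩, hh, hl⟩ := h
  obtain rfl : a = u := by simpa using hh
  refine ⟨rfl, ?_⟩
  cases q with
  | nil => left; simp_all
  | cons b q' =>
    obtain ⟨hab, hch⟩ := List.isChain_cons_cons.1 hch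
    exact Or.inr ⟨b, hab, ⟨by simp, hch⟩, rfl, by simpa using hl⟩

lemma head_mem {u v : V} {p : List V} (h : WalkFromTo E u v p) : u ∈ p :=
  List.mem_of_mem_head? h.2.1

lemma getLast_mem {u v : V} {p : List V} (h : WalkFromTo E u v p) : v ∈ p :=
  List.mem_of_getLast? h.2.2

lemma snoc {u w v : V} {q : List V} (h : WalkFromTo E u w q) (hv : E w v) :
    WalkFromTo E u v (q ++ [v]) := by
  induction q generalizing u with
  | nil => exact absurd rfl h.1.1
  | cons a q ih =>
    obtain ⟨rfl, ⟨rfl, rfl⟩ | ⟨w', hw', h'⟩⟩ := cons_cases h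
    · exact cons hv (single E v)
    · exact cons hw' (ih h')

lemma eq_singleton_or_snoc {u v : V} {p : List V} (h : WalkFromTo E u v p) :
    (p = [u] ∧ v = u) ∨ ∃ w q, p = q ++ [v] ∧ WalkFromTo E u w q ∧ E w v := by
  induction p generalizing u with
  | nil => exact absurd rfl h.1.1
  | cons a q ih =>
    obtain ⟨rfl, ⟨rfl, rfl⟩ | ⟨w, hw, h'⟩⟩ := cons_cases h
    · exact Or.inl ⟨rfl, rfl⟩
    · right
      rcases ih h' with ⟨rfl, rfl⟩ | ⟨w', q', rfl, hq', hw'v⟩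
      · exact ⟨u, [u], rfl, single E u, hw⟩
      · exact ⟨w', u :: q', rfl, cons hw hq', hw'v⟩

lemma length_pos {u v : V} {p : List V} (h : WalkFromTo E u v p) : 0 < p.length :=
  List.length_pos_of_ne_nil h.1.1

lemma eq_of_length_eq_one {u v : V} {p : List V} (h : WalkFromTo E u v p)
    (hl : p.length = 1) : u = v := by
  obtain ⟨-, hh, hl'⟩ := h
  rcases p with _ | ⟨a, _ | ⟨b, q⟩⟩ <;> simp_all

lemma adj_of_length_eq_two {u v : V} {p : List V} (h : WalkFromTo E u v p)
    (hl : p.length = 2) : E u v := by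
  obtain ⟨⟨-, hch⟩, hh, hl'⟩ := h
  rcases p with _ | ⟨a, _ | ⟨b, _ | ⟨c, q⟩⟩⟩ <;> simp at hl hh hl'
  subst hh hl'
  exact List.isChain_pair.1 hch

lemma length_le_card [Fintype V] (hac : Acyclic E) {u v : V} {p : List V}
    (h : WalkFromTo E u v p) : p.length ≤ Fintype.card V := by
  have hpw : p.Pairwise (Relation.TransGen E) :=
    List.isChain_iff_pairwise.1 (h.1.2.imp fun _ _ => .single)
  have hnd : p.Pairwise (· ≠ ·) := hpw.imp fun hab => by rintro rfl; exact hac _ hab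
  exact List.Nodup.length_le_card hnd

end WalkFromTo

lemma Desc.exists_walkFromTo {u v : V} (h : Desc E u v) : ∃ p, WalkFromTo E u v p := by
  induction h using Relation.ReflTransGen.head_induction_on with
  | refl => exact ⟨[v], .single E v⟩
  | head hab _ ih => obtain ⟨p, hp⟩ := ih; exact ⟨_, hp.cons hab⟩

lemma IsLeaf.ne_of_adj {u v w : V} (hu : IsLeaf E u) (h : E v w) : v ≠ u := by
  rintro rfl
  exact hu w h

lemma not_desc_of_isLeaf {u v : V} (hu : IsLeaf E u) (hne : u ≠ v) : ¬ Desc E u v := by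
  intro h
  rcases Relation.ReflTransGen.cases_head h with rfl | ⟨w, hw, -⟩
  exacts [hne rfl, hu w hw]

lemma Acyclic.ne_of_adj (hac : Acyclic E) {u v : V} (h : E u v) : u ≠ v := by
  rintro rfl
  exact hac u (.single h)

lemma IsTreeNode.eq_of_adj [Finite V] {v p x : V} (hv : IsTreeNode E v) (hp : E p v)
    (hx : E x v) : x = p := by
  by_contra hne
  have : 1 < indeg E v := (Set.one_lt_ncard (Set.toFinite _)).2 ⟨x, hx, p, hp, hne⟩
  exact absurd hv this.not_ge

lemma Acyclic.wellFounded [Finite V] (hac : Acyclic E) : WellFounded (Relation.TransGen E) :=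
  have : Std.Irrefl (Relation.TransGen E) := ⟨hac⟩
  Finite.wellFounded_of_trans_of_irrefl _

lemma Acyclic.wellFounded_swap [Finite V] (hac : Acyclic E) :
    WellFounded (Function.swap (Relation.TransGen E)) :=
  have : Std.Irrefl (Function.swap (Relation.TransGen E)) := ⟨hac⟩
  Finite.wellFounded_of_trans_of_irrefl _

lemma Acyclic.exists_isLeaf_desc [Finite V] (hac : Acyclic E) (v : V) :
    ∃ w, Desc E v w ∧ IsLeaf E w := by
  obtain ⟨w, hvw, hmin⟩ := hac.wellFounded_swap.has_min {w | Desc E v w} ⟨v, .refl⟩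
  exact ⟨w, hvw, fun c hwc => hmin c (hvw.tail hwc) (.single hwc)⟩

lemma IsHybNet.desc_root [Finite V] {r : V} (hnet : IsHybNet E r) (v : V) : Desc E r v := by
  obtain ⟨w, hwv, hmin⟩ := hnet.acyclic.wellFounded.has_min {w | Desc E w v} ⟨v, .refl⟩
  have hw : IsRootNode E w := fun c hcw => hmin c (hwv.head hcw) (.single hcw)
  exact hnet.uniqueRoot w hw ▸ hwv

lemma Desc.exists_walkFromTo_length_dist {u v : V} (h : Desc E u v) :
    ∃ p, WalkFromTo E u v p ∧ p.length = dist E u v + 1 := by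
  obtain ⟨p, hp⟩ := h.exists_walkFromTo
  exact Nat.sInf_mem (s := {n | ∃ p, WalkFromTo E u v p ∧ p.length = n + 1})
    ⟨p.length - 1, p, hp, (Nat.succ_pred_eq_of_pos hp.length_pos).symm⟩

lemma dist_le_of_walkFromTo {u v : V} {p : List V} (h : WalkFromTo E u v p) {n : ℕ}
    (hl : p.length = n + 1) : dist E u v ≤ n :=
  Nat.sInf_le ⟨p, h, hl⟩

lemma dist_self_eq_zero (u : V) : dist E u u = 0 :=
  Nat.eq_zero_of_le_zero (dist_le_of_walkFromTo (.single E u) rfl)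

lemma Desc.dist_pos {u v : V} (h : Desc E u v) (hne : u ≠ v) : 0 < dist E u v := by
  obtain ⟨p, hp, hl⟩ := h.exists_walkFromTo_length_dist
  exact Nat.pos_of_ne_zero fun h0 => hne (hp.eq_of_length_eq_one (by rw [hl, h0]))

lemma Desc.adj_of_dist_eq_one {u v : V} (h : Desc E u v) (h1 : dist E u v = 1) : E u v := by
  obtain ⟨p, hp, hl⟩ := h.exists_walkFromTo_length_dist
  exact hp.adj_of_length_eq_two (by rw [hl, h1])

lemma dist_eq_one_of_adj {u v : V} (h : E u v) (hne : u ≠ v) : dist E u v = 1 :=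
  le_antisymm (dist_le_of_walkFromTo ((WalkFromTo.single E v).cons h) rfl)
    (Desc.dist_pos (.single h) hne)

lemma desc_iff_of_isTreeNode [Finite V] {v p y : V} (hv : IsTreeNode E v) (hp : E p v)
    (hne : y ≠ v) : Desc E y v ↔ Desc E y p := by
  refine ⟨fun h => ?_, fun h => h.tail hp⟩
  rcases Relation.ReflTransGen.cases_tail h with rfl | ⟨c, hyc, hcv⟩
  exacts [absurd rfl hne, hv.eq_of_adj hp hcv ▸ hyc]

lemma strictAnc_self (v : V) : StrictAnc E v v :=
  ⟨.refl, fun _ _ _ hq => hq.getLast_mem⟩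

lemma strictAnc_iff_of_isTreeNode [Finite V] {v p y : V} (hv : IsTreeNode E v) (hp : E p v)
    (hne : y ≠ v) : StrictAnc E y v ↔ StrictAnc E y p := by
  rw [StrictAnc, StrictAnc, desc_iff_of_isTreeNode hv hp hne]
  refine and_congr_right fun _ => ⟨fun hall r q hr hq => ?_, fun hall r q hr hq => ?_⟩
  · simpa [hne] using hall r _ hr (hq.snoc hp)
  · rcases hq.eq_singleton_or_snoc with ⟨-, rfl⟩ | ⟨w, q', rfl, hq', hwv⟩
    · exact absurd hp (hr p)
    · rw [hv.eq_of_adj hp hwv] at hq'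
      exact List.mem_append_left _ (hall r q' hr hq')

lemma dist_eq_add_one_of_isTreeNode [Finite V] {v p y : V} (hv : IsTreeNode E v) (hp : E p v)
    (hy : Desc E y p) (hne : y ≠ v) : dist E y v = dist E y p + 1 := by
  obtain ⟨q, hq, hql⟩ := hy.exists_walkFromTo_length_dist
  refine le_antisymm (dist_le_of_walkFromTo (hq.snoc hp) (by simp [hql])) ?_
  obtain ⟨qv, hqv, hvl⟩ := Desc.exists_walkFromTo_length_dist (hy.tail hp)
  rcases hqv.eq_singleton_or_snoc with ⟨-, rfl⟩ | ⟨w, q', rfl, hq', hwv⟩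
  · exact absurd rfl hne
  · rw [hv.eq_of_adj hp hwv] at hq'
    have hq'l := hq'.length_pos
    have := dist_le_of_walkFromTo hq' (n := q'.length - 1) (by omega)
    simp only [List.length_append, List.length_singleton] at hvl
    omega

lemma height_bddAbove [Fintype V] (hac : Acyclic E) (v : V) :
    BddAbove {n | ∃ p w, WalkFromTo E v w p ∧ IsLeaf E w ∧ p.length = n + 1} :=
  ⟨Fintype.card V, fun _ ⟨_, _, hp, _, hl⟩ => by have := hp.length_le_card hac; omega⟩

lemma height_lt_of_adj [Fintype V] (hac : Acyclic E) {u v : V} (h : E u v) :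
    height E v < height E u := by
  obtain ⟨w, hvw, hw⟩ := hac.exists_isLeaf_desc v
  obtain ⟨p, hp⟩ := hvw.exists_walkFromTo
  obtain ⟨p, w, hp, hw, hl⟩ := Nat.sSup_mem
    (s := {n | ∃ p w, WalkFromTo E v w p ∧ IsLeaf E w ∧ p.length = n + 1})
    ⟨p.length - 1, p, w, hp, hw, by have := hp.length_pos; omega⟩ (height_bddAbove hac v)
  exact le_csSup (height_bddAbove hac u) ⟨u :: p, w, hp.cons h, hw, by simp [hl, height]⟩

lemma height_lt [Fintype V] (hac : Acyclic E) {u v : V} (h : Relation.TransGen E u v) :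
    height E v < height E u := by
  induction h with
  | single h => exact height_lt_of_adj hac h
  | tail _ h ih => exact (height_lt_of_adj hac h).trans ih

lemma CSAnc_comm (u v : V) : CSAnc E u v = CSAnc E v u :=
  Set.ext fun _ =>
    ⟨fun ⟨hu, hv, h⟩ => ⟨hv, hu, h.symm⟩, fun ⟨hu, hv, h⟩ => ⟨hv, hu, h.symm⟩⟩

lemma CSAnc_eq_of_isTreeNode [Finite V] {v p k : V} (hv : IsTreeNode E v) (hp : E p v)
    (hvk : ¬ Desc E v k) : CSAnc E v k = CSAnc E p k := by
  ext y
  simp only [CSAnc, Set.mem_ofPred_eq]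
  by_cases hy : y = v
  · subst hy
    exact iff_of_false (fun h => hvk h.2.1) (fun h => hvk h.2.1)
  · rw [desc_iff_of_isTreeNode hv hp hy, strictAnc_iff_of_isTreeNode hv hp hy]

lemma lcsa_congr {r u v u' v' : V} (h : CSAnc E u v = CSAnc E u' v') :
    lcsa E r u v = lcsa E r u' v' := by
  unfold lcsa
  congr 1
  ext x
  rw [IsLCSA, IsLCSA, h]

lemma lcsa_comm (r u v : V) : lcsa E r u v = lcsa E r v u :=
  lcsa_congr (CSAnc_comm u v)

lemma IsHybNet.isLCSA_lcsa [Finite V] {r : V} (hnet : IsHybNet E r) (u v : V) :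
    IsLCSA E u v (lcsa E r u v) := by
  have hr : r ∈ CSAnc E u v :=
    ⟨hnet.desc_root u, hnet.desc_root v, .inl ⟨hnet.desc_root u, fun r' _ hr' hp =>
      hnet.uniqueRoot r' hr' ▸ hp.head_mem⟩⟩
  obtain ⟨x, hx, hhx⟩ := Nat.sInf_mem (⟨_, r, hr, rfl⟩ : (height E '' CSAnc E u v).Nonempty)
  exact Classical.epsilon_spec ⟨x, hx, fun y hy => hhx ▸ Nat.sInf_le ⟨y, hy, rfl⟩⟩

lemma lcsa_eq_of_desc [Fintype V] {r u v : V} (hnet : IsHybNet E r) (h : Desc E v u) :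
    lcsa E r u v = v := by
  obtain ⟨⟨-, hzv, -⟩, hmin⟩ := hnet.isLCSA_lcsa u v
  by_contra hne
  rcases Relation.reflTransGen_iff_eq_or_transGen.1 hzv with h' | h'
  · exact hne h'.symm
  · exact (hmin v ⟨h, .refl, .inr (strictAnc_self v)⟩).not_gt (height_lt hnet.acyclic h')

lemma ell_pos [Finite V] {r u v : V} (hnet : IsHybNet E r) (h : ¬ Desc E u v) :
    0 < ell E r u v := by
  obtain ⟨⟨hzu, hzv, -⟩, -⟩ := hnet.isLCSA_lcsa u v
  exact hzu.dist_pos fun hz => h (hz ▸ hzv)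

lemma pathLen_comm (r u v : V) : pathLen E r u v = pathLen E r v u :=
  Nat.add_comm _ _

lemma pathLen_of_desc [Fintype V] {r u v : V} (hnet : IsHybNet E r) (h : Desc E v u) :
    pathLen E r u v = dist E v u := by
  rw [pathLen, ell, ell, lcsa_comm r v u, lcsa_eq_of_desc hnet h, dist_self_eq_zero, add_zero]

lemma pathLen_eq_add_one_of_isTreeNode [Finite V] {r v p k : V} (hnet : IsHybNet E r)
    (hv : IsTreeNode E v) (hp : E p v) (hvk : ¬ Desc E v k) :
    pathLen E r v k = pathLen E r p k + 1 := by
  obtain ⟨⟨hzp, hzk, -⟩, -⟩ := hnet.isLCSA_lcsa p k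
  have hzv : lcsa E r p k ≠ v := fun h => hvk (h ▸ hzk)
  rw [pathLen, pathLen, ell, ell, ell, ell, lcsa_comm r k v, lcsa_comm r k p,
    lcsa_congr (CSAnc_eq_of_isTreeNode hv hp hvk), dist_eq_add_one_of_isTreeNode hv hp hzp hzv]
  omega

lemma two_le_pathLen [Finite V] {r u v : V} (hnet : IsHybNet E r) (huv : ¬ Desc E u v)
    (hvu : ¬ Desc E v u) : 2 ≤ pathLen E r u v :=
  Nat.add_le_add (ell_pos hnet huv) (ell_pos hnet hvu)

lemma exists_common_parent_of_pathLen_eq_two [Finite V] {r u v : V} (hnet : IsHybNet E r)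
    (huv : ¬ Desc E u v) (hvu : ¬ Desc E v u) (h : pathLen E r u v = 2) :
    ∃ x, E x u ∧ E x v := by
  have hu := ell_pos hnet huv
  have hv := ell_pos hnet hvu
  obtain ⟨⟨hzu, hzv, -⟩, -⟩ := hnet.isLCSA_lcsa u v
  rw [pathLen, ell, ell, lcsa_comm r v u] at h
  rw [ell] at hu
  rw [ell, lcsa_comm r v u] at hv
  exact ⟨_, hzu.adj_of_dist_eq_one (by omega), hzv.adj_of_dist_eq_one (by omega)⟩

lemma two_le_outdeg [Finite V] {v a b : V} (ha : E v a) (hb : E v b) (hab : a ≠ b) :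
    2 ≤ outdeg E v :=
  (Set.one_lt_ncard (Set.toFinite _)).2 ⟨a, ha, b, hb, hab⟩

lemma FullyResolvedPhylo.isTreeNode_of_adj [Finite V] (hfr : FullyResolvedPhylo E) {v a b : V}
    (ha : E v a) (hb : E v b) (hab : a ≠ b) : IsTreeNode E v := by
  have h2 := two_le_outdeg ha hb hab
  have := hfr v
  simp only [Set.mem_insert_iff, Set.mem_singleton_iff, Prod.mk.injEq] at this
  unfold IsTreeNode
  omega

lemma FullyResolvedPhylo.eq_or_eq_of_adj [Finite V] (hfr : FullyResolvedPhylo E) {v a b : V}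
    (ha : E v a) (hb : E v b) (hab : a ≠ b) : ∀ w, E v w → w = a ∨ w = b := by
  have hle : outdeg E v ≤ 2 := by
    have := hfr v
    simp only [Set.mem_insert_iff, Set.mem_singleton_iff, Prod.mk.injEq] at this
    omega
  intro w hw
  by_contra! hne
  have := (Set.two_lt_ncard (Set.toFinite _)).2 ⟨w, hw, a, ha, b, hb, hne.1, hne.2, hab⟩
  exact absurd hle this.not_ge

lemma not_desc_of_children {v a b c : V} (hch : ∀ w, E v w → w = a ∨ w = b)
    (ha : ∀ w, E a w → w = c) (hb : IsLeaf E b) (hc : IsLeaf E c) ⦃z : V⦄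
    (hzv : z ≠ v) (hza : z ≠ a) (hzb : z ≠ b) (hzc : z ≠ c) : ¬ Desc E v z := by
  intro h
  obtain h | h | h | h : z = v ∨ z = a ∨ z = b ∨ z = c := by
    clear hzv hza hzb hzc
    induction h with
    | refl => exact .inl rfl
    | tail _ hxy ih =>
      rcases ih with rfl | rfl | rfl | rfl
      · exact (hch _ hxy).elim (.inr ∘ .inl) (.inr ∘ .inr ∘ .inl)
      · exact .inr (.inr (.inr (ha _ hxy)))
      · exact (hb _ hxy).elim
      · exact (hc _ hxy).elim
  exacts [hzv h, hza h, hzb h, hzc h]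

lemma pathLen_eq_three [Fintype V] {r v a i j : V} (hnet : IsHybNet E r) (hva : E v a)
    (hai : E a i) (hi : IsTreeNode E i) (hvj : E v j) (hj : IsLeaf E j) (hjt : IsTreeNode E j) :
    pathLen E r i j = 3 := by
  have hac := hnet.acyclic
  have hvi : v ≠ i := fun h => hac v (.tail (.single hva) (h ▸ hai))
  have hji : j ≠ i := fun h => hac.ne_of_adj hva (hi.eq_of_adj hai (h ▸ hvj))
  rw [pathLen_comm, pathLen_eq_add_one_of_isTreeNode hnet hjt hvj (not_desc_of_isLeaf hj hji),
    pathLen_comm, pathLen_of_desc hnet (.tail (.single hva) hai),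
    dist_eq_add_one_of_isTreeNode hi hai (.single hva) hvi,
    dist_eq_one_of_adj hva (hac.ne_of_adj hva)]

theorem stmt18_general {V : Type} [Fintype V] (E : V → V → Prop) (r : V)
    (hnet : IsHybNet E r) (hfr : FullyResolvedPhylo E)
    (A v1 v2 i j1 j2 : V)
    (hAi : E A i) (hAonly : ∀ w, E A w → w = i)
    (hileaf : IsLeaf E i) (hitree : IsTreeNode E i)
    (hne : v1 ≠ v2) (hv1A : E v1 A) (hv2A : E v2 A)
    (hv1j1 : E v1 j1) (hv2j2 : E v2 j2)
    (hj1leaf : IsLeaf E j1) (hj1tree : IsTreeNode E j1)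
    (hj2leaf : IsLeaf E j2) (hj2tree : IsTreeNode E j2) :
    pathLen E r i j1 = 3 ∧ pathLen E r i j2 = 3 ∧ 4 ≤ pathLen E r j1 j2 ∧
      (pathLen E r j1 j2 = 4 →
        ∀ k, IsLeaf E k → k ≠ i → k ≠ j1 → k ≠ j2 →
          pathLen E r j1 k = pathLen E r j2 k) := by
  have hac := hnet.acyclic
  have hAj1 : A ≠ j1 := hj1leaf.ne_of_adj hAi
  have hAj2 : A ≠ j2 := hj2leaf.ne_of_adj hAi
  have hdesc1 := not_desc_of_children (hfr.eq_or_eq_of_adj hv1A hv1j1 hAj1) hAonly hj1leaf hileaf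
  have hdesc2 := not_desc_of_children (hfr.eq_or_eq_of_adj hv2A hv2j2 hAj2) hAonly hj2leaf hileaf
  have hv12 : ¬ Desc E v1 v2 :=
    hdesc1 hne.symm (hac.ne_of_adj hv2A) (hj1leaf.ne_of_adj hv2A) (hileaf.ne_of_adj hv2A)
  have hv21 : ¬ Desc E v2 v1 :=
    hdesc2 hne (hac.ne_of_adj hv1A) (hj2leaf.ne_of_adj hv1A) (hileaf.ne_of_adj hv1A)
  have hj12 : j1 ≠ j2 := fun h => hne (hj1tree.eq_of_adj hv1j1 (h ▸ hv2j2)).symm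
  have hL : pathLen E r j1 j2 = pathLen E r v1 v2 + 2 := by
    rw [pathLen_eq_add_one_of_isTreeNode hnet hj1tree hv1j1 (not_desc_of_isLeaf hj1leaf hj12),
      pathLen_comm, pathLen_eq_add_one_of_isTreeNode hnet hj2tree hv2j2
        (not_desc_of_isLeaf hj2leaf (hj2leaf.ne_of_adj hv1A).symm), pathLen_comm]
  refine ⟨pathLen_eq_three hnet hv1A hAi hitree hv1j1 hj1leaf hj1tree,
    pathLen_eq_three hnet hv2A hAi hitree hv2j2 hj2leaf hj2tree,
    hL ▸ Nat.add_le_add_right (two_le_pathLen hnet hv12 hv21) 2,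
    fun h4 k hk hki hkj1 hkj2 => ?_⟩
  obtain ⟨x, hxv1, hxv2⟩ := exists_common_parent_of_pathLen_eq_two hnet hv12 hv21 (by omega)
  calc pathLen E r j1 k = pathLen E r x k + 2 := by
        rw [pathLen_eq_add_one_of_isTreeNode hnet hj1tree hv1j1
            (not_desc_of_isLeaf hj1leaf (Ne.symm hkj1)),
          pathLen_eq_add_one_of_isTreeNode hnet (hfr.isTreeNode_of_adj hv1A hv1j1 hAj1) hxv1
            (hdesc1 (hk.ne_of_adj hv1A).symm (hk.ne_of_adj hAi).symm hkj1 hki)]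
    _ = pathLen E r j2 k := by
        rw [pathLen_eq_add_one_of_isTreeNode hnet hj2tree hv2j2
            (not_desc_of_isLeaf hj2leaf (Ne.symm hkj2)),
          pathLen_eq_add_one_of_isTreeNode hnet (hfr.isTreeNode_of_adj hv2A hv2j2 hAj2) hxv2
            (hdesc2 (hk.ne_of_adj hv2A).symm (hk.ne_of_adj hAi).symm hkj2 hki)]

/-- In a fully resolved TCTC phylogenetic network, if a hybrid node `A` has
only child the tree leaf `i` and its parents `v1, v2` have other children the tree leaves
`j1, j2`, then `L_N(i,j1) = L_N(i,j2) = 3`, `L_N(j1,j2) ≥ 4`, and if `L_N(j1,j2) = 4` then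
`L_N(j1,k) = L_N(j2,k)` for every other leaf `k`. -/
theorem stmt18 {V : Type} [Fintype V] (E : V → V → Prop) (r : V)
    (hnet : IsHybNet E r) (hph : PhyloNet E) (hfr : FullyResolvedPhylo E)
    (htc : TreeChild E) (hti : TimeConsistent E)
    (A v1 v2 i j1 j2 : V)
    (hA : IsHybrid E A) (hAi : E A i) (hAonly : ∀ w, E A w → w = i)
    (hileaf : IsLeaf E i) (hitree : IsTreeNode E i)
    (hne : v1 ≠ v2) (hv1A : E v1 A) (hv2A : E v2 A)
    (hparents : ∀ x, E x A → x = v1 ∨ x = v2)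
    (hv1j1 : E v1 j1) (hv2j2 : E v2 j2)
    (hj1leaf : IsLeaf E j1) (hj1tree : IsTreeNode E j1)
    (hj2leaf : IsLeaf E j2) (hj2tree : IsTreeNode E j2) :
    pathLen E r i j1 = 3 ∧ pathLen E r i j2 = 3 ∧ 4 ≤ pathLen E r j1 j2 ∧
      (pathLen E r j1 j2 = 4 →
        ∀ k, IsLeaf E k → k ≠ i → k ≠ j1 → k ≠ j2 →
          pathLen E r j1 k = pathLen E r j2 k) :=
  stmt18_general E r hnet hfr A v1 v2 i j1 j2 hAi hAonly hileaf hitree hne hv1A hv2A hv1j1 hv2j2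
    hj1leaf hj1tree hj2leaf hj2tree
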